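/- arXiv:1302.3904 — 2 statements merged into one kernel-verified Lean document; each statement's English description precedes it below -/
import Mathlib

section
/- Let $m \geq 0$ be an integer and $A$ a commutative ring in which all integers $1 \leq i \leq m$ are invertible. Define a bilinear pairing on the module $\mathrm{Sym}^m(A)$ of homogeneous polynomials of degree $m$ in two variables $X, Y$ over $A$ by $[\sum_{i=0}^m a_i X^i Y^{m-i}, \sum_{i=0}^m b_i X^i Y^{m-i}]_m = \sum_{i=0}^m (-1)^i a_i b_{m-i} / \binom{m}{i}$. Then this pairing is perfect, i.e., the induced map $\mathrm{Sym}^m(A) \to \mathrm{Hom}_A(\mathrm{Sym}^m(A), A)$ is an isomorphism. -/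
/-- The pairing `[·,·]ₘ` on `Sym^m(A)`, where a homogeneous polynomial of degree `m`
`∑ aᵢ Xⁱ Y^{m-i}` is identified with its coefficient vector `(a₀, …, a_m) : Fin (m+1) → A`.
We have `[a, b]ₘ = ∑ (-1)ⁱ aᵢ b_{m-i} / (m choose i)`, where division by the binomial
coefficient is via `Ring.inverse`. -/
noncomputable def symPairing (m : ℕ) {A : Type*} [CommRing A]
    (a b : Fin (m + 1) → A) : A :=
  ∑ i : Fin (m + 1),
    (-1 : A) ^ (i : ℕ) * a i * b i.rev * Ring.inverse ((m.choose (i : ℕ) : A))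

lemma factorial_isUnit {A : Type*} [CommRing A] (m : ℕ)
    (hinv : ∀ i : ℕ, 1 ≤ i → i ≤ m → IsUnit (i : A)) (n : ℕ) (hn : n ≤ m) :
    IsUnit ((n.factorial : A)) := by
  induction n with
  | zero => simp
  | succ k ih =>
    rw [Nat.factorial_succ, Nat.cast_mul]
    exact (hinv (k + 1) (Nat.succ_le_succ (Nat.zero_le _)) hn).mul
      (ih (le_trans (Nat.le_succ k) hn))

lemma choose_isUnit {A : Type*} [CommRing A] (m : ℕ)
    (hinv : ∀ i : ℕ, 1 ≤ i → i ≤ m → IsUnit (i : A)) (i : ℕ) (hi : i ≤ m) :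
    IsUnit ((m.choose i : A)) := by
  have h := Nat.choose_mul_factorial_mul_factorial hi
  have heq : ((m.choose i : A)) * ((i.factorial : A) * ((m - i).factorial : A))
      = (m.factorial : A) := by
    push_cast [← h]; ring
  exact isUnit_of_mul_isUnit_left (heq ▸ factorial_isUnit m hinv m le_rfl)

/-- If all integers `1 ≤ i ≤ m` are invertible in the commutative ring `A`,
then the pairing `[·,·]ₘ` on `Sym^m(A)` is perfect: the induced map
`Sym^m(A) → Hom_A(Sym^m(A), A)` is injective and surjective (hence an isomorphism). -/
theorem symPairing_perfect (m : ℕ) (A : Type*) [CommRing A]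
    (hinv : ∀ i : ℕ, 1 ≤ i → i ≤ m → IsUnit (i : A)) :
    (∀ a : Fin (m + 1) → A, (∀ b, symPairing m a b = 0) → a = 0) ∧
      (∀ f : (Fin (m + 1) → A) →ₗ[A] A, ∃ a : Fin (m + 1) → A,
        ∀ b, symPairing m a b = f b) := by
  have hch : ∀ i : Fin (m + 1), IsUnit ((m.choose (i : ℕ) : A)) := fun i =>
    choose_isUnit m hinv i (Nat.lt_succ_iff.mp i.isLt)
  have hsq : ∀ i : Fin (m + 1), ((-1 : A) ^ (i : ℕ)) * ((-1 : A) ^ (i : ℕ)) = 1 := by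
    intro i
    rw [← pow_add, ← two_mul, pow_mul]
    simp
  have hmi : ∀ i : Fin (m + 1),
      ((m.choose (i : ℕ) : A)) * Ring.inverse ((m.choose (i : ℕ) : A)) = 1 := fun i =>
    Ring.mul_inverse_cancel _ (hch i)
  have key : ∀ (a : Fin (m + 1) → A) (j : Fin (m + 1)),
      symPairing m a (Pi.single j 1) =
        (-1 : A) ^ ((j.rev : ℕ)) * a j.rev * Ring.inverse ((m.choose (j.rev : ℕ) : A)) := by
    intro a j
    unfold symPairing
    rw [Finset.sum_eq_single j.rev]
    · simp [Pi.single_apply]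
    · intro i _ hij
      have : i.rev ≠ j := fun h => hij (by rw [← h, Fin.rev_rev])
      simp [Pi.single_apply, this]
    · simp
  constructor
  · intro a ha
    funext k
    have h := ha (Pi.single k.rev 1)
    rw [key a k.rev, Fin.rev_rev] at h
    have h' := congrArg (· * ((-1 : A) ^ (k : ℕ) * (m.choose (k : ℕ) : A))) h
    simp only [zero_mul] at h'
    calc a k = ((-1 : A) ^ (k : ℕ) * ((-1 : A) ^ (k : ℕ))) *
          ((m.choose (k : ℕ) : A) * Ring.inverse ((m.choose (k : ℕ) : A))) * a k := by
            rw [hsq k, hmi k, one_mul, one_mul]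
      _ = (-1 : A) ^ (k : ℕ) * a k * Ring.inverse ((m.choose (k : ℕ) : A)) *
            ((-1 : A) ^ (k : ℕ) * (m.choose (k : ℕ) : A)) := by ring
      _ = 0 := h'
  · intro f
    refine ⟨fun k => (-1 : A) ^ (k : ℕ) * (m.choose (k : ℕ) : A) * f (Pi.single k.rev 1), ?_⟩
    intro b
    have hb : b = ∑ j : Fin (m + 1), b j • (Pi.single j 1 : Fin (m + 1) → A) := by
      funext x
      simp [Pi.single_apply, Finset.sum_ite_eq']
    conv_rhs => rw [hb, map_sum]
    unfold symPairing
    rw [← (Equiv.sum_comp (Function.Involutive.toPerm Fin.rev Fin.rev_involutive)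
      (fun j => f (b j • (Pi.single j 1 : Fin (m + 1) → A))))]
    apply Finset.sum_congr rfl
    intro i _
    have hrev : (Function.Involutive.toPerm Fin.rev Fin.rev_involutive) i = i.rev := rfl
    rw [hrev, map_smul, smul_eq_mul]
    calc (-1 : A) ^ (i : ℕ) * ((-1 : A) ^ (i : ℕ) * (m.choose (i : ℕ) : A) *
          f (Pi.single i.rev 1)) * b i.rev * Ring.inverse ((m.choose (i : ℕ) : A))
        = (((-1 : A) ^ (i : ℕ)) * ((-1 : A) ^ (i : ℕ))) *
          (((m.choose (i : ℕ) : A)) * Ring.inverse ((m.choose (i : ℕ) : A))) *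
          (b i.rev * f (Pi.single i.rev 1)) := by ring
      _ = b i.rev * f (Pi.single i.rev 1) := by rw [hsq i, hmi i, one_mul, one_mul]
end

section
/- Let $u : N \to M$ be an injective homomorphism of finitely generated free modules over a discrete valuation ring $\mathcal{O}$ with uniformizer $\varpi$. Define $u(N)^{\mathrm{sat}} = (u(N) \otimes_{\mathcal{O}} E) \cap M$, where $E$ is the fraction field. Then for all sufficiently large positive integers $s$, there is an isomorphism of $\mathcal{O}$-modules $u(N)^{\mathrm{sat}}/u(N) \cong \ker(u \otimes 1 : N \otimes \mathcal{O}/\varpi^s \to M \otimes \mathcal{O}/\varpi^s)$. -/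
/-!
Write `C = M ⧸ u(N)`. The saturation modulo `u(N)` is the `ϖ`-power torsion of `C`; as `C` is
Noetherian, the chain `C[ϖ^k]` stabilises, so this torsion equals `C[ϖ^s]` for `s` large. On the
other side, the snake lemma applied to multiplication by `ϖ^s` on `0 → N → M → C → 0` (injective on
the torsion-free `M`) identifies `C[ϖ^s]` with the kernel of `N/ϖ^s N → M/ϖ^s M`, that is of
`u ⊗ 1` on `- ⊗ O/ϖ^s`.
-/

open TensorProduct

/-- The saturation of a submodule `N'` of `M` with respect to the uniformizer `ϖ`:
the set of `m ∈ M` with `ϖ^k • m ∈ N'` for some `k ≥ 0`.  (Over a discrete valuation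
ring with uniformizer `ϖ` this agrees with `(N' ⊗ E) ∩ M`.) -/
def satur {O M : Type} [CommRing O] [AddCommGroup M] [Module O M]
    (ϖ : O) (N' : Submodule O M) : Submodule O M where
  carrier := {m | ∃ k : ℕ, ϖ ^ k • m ∈ N'}
  zero_mem' := ⟨0, by simp⟩
  add_mem' := by
    rintro a b ⟨k, hk⟩ ⟨l, hl⟩
    exact ⟨k + l, by
      rw [smul_add, pow_add]
      exact add_mem (by rw [mul_comm, mul_smul]; exact N'.smul_mem _ hk)
        (by rw [mul_smul]; exact N'.smul_mem _ hl)⟩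
  smul_mem' := by
    rintro c a ⟨k, hk⟩
    exact ⟨k, by rw [smul_comm]; exact N'.smul_mem _ hk⟩

open Function
open scoped Pointwise

namespace Submodule

variable {R M : Type*} [CommRing R] [AddCommGroup M] [Module R M]

noncomputable def quotientComapSubtypeEquivMapMkQ (P Q : Submodule R M) :
    (P ⧸ Q.comap P.subtype) ≃ₗ[R] P.map Q.mkQ :=
  quotEquivOfEq _ _ (by rw [LinearMap.ker_comp, ker_mkQ]) ≪≫ₗ
    (Q.mkQ ∘ₗ P.subtype).quotKerEquivRange ≪≫ₗ
    LinearEquiv.ofEq _ _ (by rw [LinearMap.range_comp, range_subtype])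

theorem exists_torsionBy_pow_eq_torsion'_powers [IsNoetherian R M] (a : R) :
    ∃ s₀ : ℕ, ∀ s, s₀ ≤ s → torsionBy R M (a ^ s) = torsion' R M (Submonoid.powers a) := by
  have hmono : Monotone fun k : ℕ => torsionBy R M (a ^ k) := fun k l hkl =>
    torsionBy_le_torsionBy_of_dvd _ _ (pow_dvd_pow a hkl)
  obtain ⟨s₀, hs₀⟩ : ∃ s₀, ∀ s, s₀ ≤ s → torsionBy R M (a ^ s₀) = torsionBy R M (a ^ s) :=
    monotone_stabilizes_iff_noetherian.mpr ‹_› ⟨_, hmono⟩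
  refine ⟨s₀, fun s hs => le_antisymm ?_ ?_⟩
  · intro x hx
    exact ⟨⟨a ^ s, s, rfl⟩, hx⟩
  · rintro x ⟨⟨_, k, rfl⟩, hx⟩
    have hk : x ∈ torsionBy R M (a ^ max k s) := hmono (le_max_left k s) hx
    rwa [← hs₀ _ (le_max_of_le_right hs), hs₀ s hs] at hk

end Submodule

theorem Submodule.map_mkQ_satur {R M : Type} [CommRing R] [AddCommGroup M] [Module R M]
    (ϖ : R) (P : Submodule R M) :
    (satur ϖ P).map P.mkQ = torsion' R (M ⧸ P) (Submonoid.powers ϖ) := by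
  ext x
  obtain ⟨m, rfl⟩ := P.mkQ_surjective x
  simp only [mem_map, mem_torsion'_iff, Subtype.exists, Submonoid.mem_powers_iff,
    exists_prop, Submonoid.mk_smul]
  constructor
  · rintro ⟨m', ⟨k, hk⟩, hm'⟩
    refine ⟨ϖ ^ k, ⟨k, rfl⟩, ?_⟩
    rw [← hm', ← map_smul, mkQ_apply, Quotient.mk_eq_zero]
    exact hk
  · rintro ⟨_, ⟨k, rfl⟩, hk⟩
    rw [← map_smul, mkQ_apply, Quotient.mk_eq_zero] at hk
    exact ⟨m, ⟨k, hk⟩, rfl⟩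

noncomputable def LinearEquiv.kerEquivOfComm {R M N M' N' : Type*} [CommRing R]
    [AddCommGroup M] [Module R M] [AddCommGroup N] [Module R N]
    [AddCommGroup M'] [Module R M'] [AddCommGroup N'] [Module R N']
    {g : M →ₗ[R] N} {g' : M' →ₗ[R] N'} (e : M ≃ₗ[R] M') (e' : N ≃ₗ[R] N')
    (h : e'.toLinearMap ∘ₗ g = g' ∘ₗ e.toLinearMap) :
    LinearMap.ker g ≃ₗ[R] LinearMap.ker g' :=
  e.submoduleMap _ ≪≫ₗ LinearEquiv.ofEq _ _ (by
    rw [← e'.ker_comp g, h, LinearMap.ker_comp]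
    exact Submodule.map_comap_eq_of_surjective e.surjective _)

section ConnectingMap

variable {R N M : Type*} [CommRing R] [AddCommGroup N] [Module R N] [AddCommGroup M] [Module R M]

theorem exact_smul_mkQ_smul_top (r : R) :
    Exact (DistribSMul.toLinearMap R N r) (r • ⊤ : Submodule R N).mkQ :=
  LinearMap.exact_iff.mpr <| by rw [Submodule.ker_mkQ, ← Submodule.map_top]; rfl

theorem exact_subtype_torsionBy (r : R) :
    Exact (Submodule.torsionBy R M r).subtype (DistribSMul.toLinearMap R M r) :=
  LinearMap.exact_subtype_ker_map _

theorem LinearMap.comp_smul_eq_smul_comp (f : N →ₗ[R] M) (r : R) :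
    f ∘ₗ DistribSMul.toLinearMap R N r = DistribSMul.toLinearMap R M r ∘ₗ f := by
  ext; simp

variable {f : N →ₗ[R] M} (hf : Injective f) (r : R)

noncomputable def connectingTorsionBy :
    Submodule.torsionBy R (M ⧸ LinearMap.range f) r →ₗ[R] QuotSMulTop r N :=
  SnakeLemma.δ' (DistribSMul.toLinearMap R N r) (DistribSMul.toLinearMap R M r)
    (DistribSMul.toLinearMap R _ r) f (LinearMap.range f).mkQ (LinearMap.exact_map_mkQ_range f)
    f (LinearMap.range f).mkQ (LinearMap.exact_map_mkQ_range f)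
    (f.comp_smul_eq_smul_comp r) ((LinearMap.range f).mkQ.comp_smul_eq_smul_comp r)
    _ (exact_subtype_torsionBy r)
    _ (exact_smul_mkQ_smul_top r) (Submodule.mkQ_surjective _) hf

theorem connectingTorsionBy_injective (hr : IsSMulRegular M r) :
    Injective (connectingTorsionBy hf r) := by
  have hι₂ : Exact (0 : PUnit →ₗ[R] M) (DistribSMul.toLinearMap R M r) :=
    (LinearMap.exact_zero_iff_injective PUnit _).mpr hr
  rw [← LinearMap.exact_zero_iff_injective PUnit]
  unfold connectingTorsionBy
  apply SnakeLemma.exact_δ'_right (hι₂ := hι₂) (F := 0)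
  · simp
  · exact Submodule.injective_subtype _

theorem exact_connectingTorsionBy_quotSMulTopMap :
    Exact (connectingTorsionBy hf r) (QuotSMulTop.map r f) := by
  unfold connectingTorsionBy
  apply SnakeLemma.exact_δ'_left (hπ₂ := exact_smul_mkQ_smul_top r)
  · exact QuotSMulTop.map_comp_mkQ r f
  · exact Submodule.mkQ_surjective _

noncomputable def torsionByEquivKerQuotSMulTopMap (hr : IsSMulRegular M r) :
    Submodule.torsionBy R (M ⧸ LinearMap.range f) r ≃ₗ[R]
      LinearMap.ker (QuotSMulTop.map r f) :=
  LinearEquiv.ofInjective _ (connectingTorsionBy_injective hf r hr) ≪≫ₗ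
    LinearEquiv.ofEq _ _ (exact_connectingTorsionBy_quotSMulTopMap hf r).linearMap_ker_eq.symm

end ConnectingMap

theorem saturation_quotient_iso_ker_tensor_general
    (O : Type) [CommRing O] [IsDomain O] [IsDiscreteValuationRing O]
    (ϖ : O) (hϖ : Irreducible ϖ)
    (N M : Type) [AddCommGroup N] [AddCommGroup M] [Module O N] [Module O M]
    [Module.Free O M] [Module.Finite O M]
    (u : N →ₗ[O] M) (hu : Function.Injective u) :
    ∃ s₀ : ℕ, ∀ s : ℕ, s₀ ≤ s →
      Nonempty
        ((↥(satur ϖ (LinearMap.range u)) ⧸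
            (LinearMap.range u).comap (satur ϖ (LinearMap.range u)).subtype) ≃ₗ[O]
          ↥(LinearMap.ker
            (LinearMap.rTensor (O ⧸ Ideal.span {ϖ ^ s}) u :
              N ⊗[O] (O ⧸ Ideal.span {ϖ ^ s}) →ₗ[O] M ⊗[O] (O ⧸ Ideal.span {ϖ ^ s})))) := by
  obtain ⟨s₀, hs₀⟩ :=
    Submodule.exists_torsionBy_pow_eq_torsion'_powers (M := M ⧸ LinearMap.range u) ϖ
  refine ⟨s₀, fun s hs => ⟨?_⟩⟩
  have hreg : IsSMulRegular M (ϖ ^ s) := .of_ne_zero (pow_ne_zero s hϖ.ne_zero)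
  exact (satur ϖ _).quotientComapSubtypeEquivMapMkQ _ ≪≫ₗ
    LinearEquiv.ofEq _ _ ((Submodule.map_mkQ_satur ϖ _).trans (hs₀ s hs).symm) ≪≫ₗ
    torsionByEquivKerQuotSMulTopMap hu (ϖ ^ s) hreg ≪≫ₗ
    LinearEquiv.kerEquivOfComm _ _ (QuotSMulTop.equivTensorQuot_naturality (ϖ ^ s) u)

/-- Bellaïche–Graftieaux, Lemme 4.1.1. Let `u : N → M` be an injective map
of finitely generated free modules over a discrete valuation ring `O` with uniformizer `ϖ`.
Then for all sufficiently large `s` there is an isomorphism of `O`-modules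
`u(N)^sat / u(N) ≅ ker (u ⊗ 1 : N ⊗ O/ϖ^s → M ⊗ O/ϖ^s)`. -/
theorem saturation_quotient_iso_ker_tensor
    (O : Type) [CommRing O] [IsDomain O] [IsDiscreteValuationRing O]
    (ϖ : O) (hϖ : Irreducible ϖ)
    (N M : Type) [AddCommGroup N] [AddCommGroup M] [Module O N] [Module O M]
    [Module.Free O N] [Module.Finite O N] [Module.Free O M] [Module.Finite O M]
    (u : N →ₗ[O] M) (hu : Function.Injective u) :
    ∃ s₀ : ℕ, ∀ s : ℕ, s₀ ≤ s →
      Nonempty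
        ((↥(satur ϖ (LinearMap.range u)) ⧸
            (LinearMap.range u).comap (satur ϖ (LinearMap.range u)).subtype) ≃ₗ[O]
          ↥(LinearMap.ker
            (LinearMap.rTensor (O ⧸ Ideal.span {ϖ ^ s}) u :
              N ⊗[O] (O ⧸ Ideal.span {ϖ ^ s}) →ₗ[O] M ⊗[O] (O ⧸ Ideal.span {ϖ ^ s})))) :=
  saturation_quotient_iso_ker_tensor_general O ϖ hϖ N M u hu
end
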